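/- Let (Σ, S, R, {R^D_A}_A, {R^C_A}_A, H) be a TEHS and let M' be the derived pseudo-TEM. Then for every formula χ and every point (r,n): if χ ∈ H(r,n) then M',(r,n) ⊨ χ, and if ¬χ ∈ H(r,n) then M',(r,n) ⊨ ¬χ. -/

import Mathlib

namespace CMATEL

/-- A coalition is a nonempty set of agents. -/
def Coalition (Agt : Type) : Type := {A : Set Agt // A.Nonempty}

/-- The singleton coalition `{a}`. -/
def single {Agt : Type} (a : Agt) : Coalition Agt := ⟨{a}, Set.singleton_nonempty a⟩

/-- Formulas of the language L. -/
inductive Formula (Agt AP : Type) : Type where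
  | atom : AP → Formula Agt AP
  | neg  : Formula Agt AP → Formula Agt AP
  | and  : Formula Agt AP → Formula Agt AP → Formula Agt AP
  | next : Formula Agt AP → Formula Agt AP
  | untl : Formula Agt AP → Formula Agt AP → Formula Agt AP
  | dk   : Coalition Agt → Formula Agt AP → Formula Agt AP
  | ck   : Coalition Agt → Formula Agt AP → Formula Agt AP

variable {Agt AP : Type}

def Formula.imp (φ ψ : Formula Agt AP) : Formula Agt AP :=
  Formula.neg (Formula.and φ (Formula.neg ψ))
def Formula.or (φ ψ : Formula Agt AP) : Formula Agt AP :=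
  Formula.neg (Formula.and (Formula.neg φ) (Formula.neg ψ))
def Formula.iff (φ ψ : Formula Agt AP) : Formula Agt AP :=
  Formula.and (φ.imp ψ) (ψ.imp φ)

/-- The set of subformulas of a formula. -/
def Formula.subf : Formula Agt AP → Set (Formula Agt AP)
  | .atom p   => {Formula.atom p}
  | .neg φ    => insert (Formula.neg φ) φ.subf
  | .and φ ψ  => insert (Formula.and φ ψ) (φ.subf ∪ ψ.subf)
  | .next φ   => insert (Formula.next φ) φ.subf
  | .untl φ ψ => insert (Formula.untl φ ψ) (φ.subf ∪ ψ.subf)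
  | .dk A φ   => insert (Formula.dk A φ) φ.subf
  | .ck A φ   => insert (Formula.ck A φ) φ.subf

/-- A temporal-epistemic system (TES): a nonempty set of states, a nonempty set
of runs, and, for every coalition `A`, relations `R^D_A` and `R^C_A` on points,
where `R^C_A` is the reflexive transitive closure of the union of `R^D_{A'}`
over coalitions `A' ⊆ A`. -/
structure TES (Agt : Type) where
  State : Type
  stateNE : Nonempty State
  runs : Set (ℕ → State)
  runsNE : runs.Nonempty
  RD : Coalition Agt → ↥runs × ℕ → ↥runs × ℕ → Prop
  RC : Coalition Agt → ↥runs × ℕ → ↥runs × ℕ → Prop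
  hRC : ∀ A : Coalition Agt, RC A =
    Relation.ReflTransGen (fun x y => ∃ A' : Coalition Agt, A'.1 ⊆ A.1 ∧ RD A' x y)

abbrev TES.Point (G : TES Agt) : Type := ↥G.runs × ℕ

/-- Synchrony: epistemically related points have the same time component. -/
def TES.Synchronous (G : TES Agt) : Prop :=
  ∀ (A : Coalition Agt) (x y : G.Point), G.RD A x y → x.2 = y.2

/-- A TEF: each `R^D_A` is an equivalence, and `R^D_A = ⋂_{a ∈ A} R^D_{{a}}`. -/
def IsTEF (G : TES Agt) : Prop :=
  (∀ A : Coalition Agt, Equivalence (G.RD A)) ∧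
  (∀ (A : Coalition Agt) (x y : G.Point), G.RD A x y ↔ ∀ a ∈ A.1, G.RD (single a) x y)

/-- A pseudo-TEF: each `R^D_A` is an equivalence, and `R^D_A ⊆ R^D_B` for `B ⊆ A`. -/
def IsPseudoTEF (G : TES Agt) : Prop :=
  (∀ A : Coalition Agt, Equivalence (G.RD A)) ∧
  (∀ (A B : Coalition Agt), B.1 ⊆ A.1 → ∀ x y : G.Point, G.RD A x y → G.RD B x y)

/-- Satisfaction at points `R × ℕ`, given the epistemic relations and a labeling. -/
def Sat {R : Type} (RD RC : Coalition Agt → R × ℕ → R × ℕ → Prop)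
    (lab : R × ℕ → Set AP) : R × ℕ → Formula Agt AP → Prop
  | x, .atom p => p ∈ lab x
  | x, .neg φ => ¬ Sat RD RC lab x φ
  | x, .and φ ψ => Sat RD RC lab x φ ∧ Sat RD RC lab x ψ
  | x, .next φ => Sat RD RC lab (x.1, x.2 + 1) φ
  | x, .untl φ ψ => ∃ i, x.2 ≤ i ∧ Sat RD RC lab (x.1, i) ψ ∧
      ∀ j, x.2 ≤ j → j < i → Sat RD RC lab (x.1, j) φ
  | x, .dk A φ => ∀ y, RD A x y → Sat RD RC lab y φ
  | x, .ck A φ => ∀ y, RC A x y → Sat RD RC lab y φ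

/-- A temporal-epistemic model: a TEF together with a labeling of points. -/
structure TEM (Agt AP : Type) where
  G : TES Agt
  lab : G.Point → Set AP
  isTEF : IsTEF G

def TEM.sat (M : TEM Agt AP) : M.G.Point → Formula Agt AP → Prop :=
  Sat M.G.RD M.G.RC M.lab

/-- A pseudo temporal-epistemic model: a pseudo-TEF together with a labeling. -/
structure PseudoTEM (Agt AP : Type) where
  G : TES Agt
  lab : G.Point → Set AP
  isPTEF : IsPseudoTEF G

def PseudoTEM.sat (M : PseudoTEM Agt AP) : M.G.Point → Formula Agt AP → Prop :=
  Sat M.G.RD M.G.RC M.lab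

/-- `A`-reachability: the reflexive transitive closure of single-agent steps
`R^D_{{a}}`, `a ∈ A`. -/
def AReach (G : TES Agt) (A : Coalition Agt) : G.Point → G.Point → Prop :=
  Relation.ReflTransGen (fun x y => ∃ a ∈ A.1, G.RD (single a) x y)

/-- Fully expanded sets of formulas. -/
def FullyExpanded (Δ : Set (Formula Agt AP)) : Prop :=
  (∀ φ : Formula Agt AP, Formula.neg (Formula.neg φ) ∈ Δ → φ ∈ Δ) ∧
  (∀ φ ψ : Formula Agt AP, Formula.and φ ψ ∈ Δ → φ ∈ Δ ∧ ψ ∈ Δ) ∧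
  (∀ φ ψ : Formula Agt AP, Formula.neg (Formula.and φ ψ) ∈ Δ →
      Formula.neg φ ∈ Δ ∨ Formula.neg ψ ∈ Δ) ∧
  (∀ φ : Formula Agt AP, Formula.neg (Formula.next φ) ∈ Δ →
      Formula.next (Formula.neg φ) ∈ Δ) ∧
  (∀ φ ψ : Formula Agt AP, Formula.untl φ ψ ∈ Δ →
      ψ ∈ Δ ∨ (φ ∈ Δ ∧ Formula.next (Formula.untl φ ψ) ∈ Δ)) ∧
  (∀ φ ψ : Formula Agt AP, Formula.neg (Formula.untl φ ψ) ∈ Δ →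
      (Formula.neg ψ ∈ Δ ∧ Formula.neg φ ∈ Δ) ∨
      (Formula.neg ψ ∈ Δ ∧ Formula.neg (Formula.next (Formula.untl φ ψ)) ∈ Δ)) ∧
  (∀ (A A' : Coalition Agt) (φ : Formula Agt AP), Formula.dk A φ ∈ Δ →
      A.1 ⊆ A'.1 → Formula.dk A' φ ∈ Δ) ∧
  (∀ (A : Coalition Agt) (φ : Formula Agt AP), Formula.dk A φ ∈ Δ → φ ∈ Δ) ∧
  (∀ (A : Coalition Agt) (φ : Formula Agt AP), Formula.ck A φ ∈ Δ →
      ∀ a ∈ A.1, Formula.dk (single a) (Formula.and φ (Formula.ck A φ)) ∈ Δ) ∧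
  (∀ (A : Coalition Agt) (φ : Formula Agt AP), Formula.neg (Formula.ck A φ) ∈ Δ →
      ∃ a ∈ A.1, Formula.neg (Formula.dk (single a) (Formula.and φ (Formula.ck A φ))) ∈ Δ) ∧
  (∀ ψ ∈ Δ, ∀ (A : Coalition Agt) (φ : Formula Agt AP),
      Formula.dk A φ ∈ ψ.subf → Formula.dk A φ ∈ Δ ∨ Formula.neg (Formula.dk A φ) ∈ Δ)

/-- Hintikka-structure conditions (H1)–(H7) for a labeling `H` on a TES. -/
def IsHintikka (G : TES Agt) (H : G.Point → Set (Formula Agt AP)) : Prop :=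
  (∀ (x : G.Point) (φ : Formula Agt AP), Formula.neg φ ∈ H x → φ ∉ H x) ∧
  (∀ x : G.Point, FullyExpanded (H x)) ∧
  (∀ (r : ↥G.runs) (n : ℕ) (φ : Formula Agt AP),
      Formula.next φ ∈ H (r, n) → φ ∈ H (r, n + 1)) ∧
  (∀ (r : ↥G.runs) (n : ℕ) (φ ψ : Formula Agt AP), Formula.untl φ ψ ∈ H (r, n) →
      ∃ i, n ≤ i ∧ ψ ∈ H (r, i) ∧ ∀ j, n ≤ j → j < i → φ ∈ H (r, j)) ∧
  (∀ (x : G.Point) (A : Coalition Agt) (φ : Formula Agt AP),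
      Formula.neg (Formula.dk A φ) ∈ H x →
      ∃ y : G.Point, G.RD A x y ∧ Formula.neg φ ∈ H y) ∧
  (∀ (x y : G.Point) (A : Coalition Agt), G.RD A x y →
      ∀ (A' : Coalition Agt), A'.1 ⊆ A.1 → ∀ φ : Formula Agt AP,
        (Formula.dk A' φ ∈ H x ↔ Formula.dk A' φ ∈ H y)) ∧
  (∀ (x : G.Point) (A : Coalition Agt) (φ : Formula Agt AP),
      Formula.neg (Formula.ck A φ) ∈ H x →
      ∃ y : G.Point, G.RC A x y ∧ Formula.neg φ ∈ H y)

/-- A temporal-epistemic Hintikka structure. -/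
structure TEHS (Agt AP : Type) where
  G : TES Agt
  H : G.Point → Set (Formula Agt AP)
  isH : IsHintikka G H

def TEHS.Synchronous (Hs : TEHS Agt AP) : Prop := Hs.G.Synchronous

/-- Derived relation `R'^D_A`: the reflexive, symmetric and transitive closure of
the union of `R^D_B` over coalitions `B ⊇ A`. -/
def derivedRD (G : TES Agt) (A : Coalition Agt) : G.Point → G.Point → Prop :=
  Relation.EqvGen (fun x y => ∃ B : Coalition Agt, A.1 ⊆ B.1 ∧ G.RD B x y)

/-- Derived relation `R'^C_A`: the transitive closure of the union of
`R'^D_{{a}}` over `a ∈ A`. -/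
def derivedRC (G : TES Agt) (A : Coalition Agt) : G.Point → G.Point → Prop :=
  Relation.TransGen (fun x y => ∃ a ∈ A.1, derivedRD G (single a) x y)

/-- Derived labeling `L(r,n) = H(r,n) ∩ AP`. -/
def derivedLab (Hs : TEHS Agt AP) : Hs.G.Point → Set AP :=
  fun x => {p | Formula.atom p ∈ Hs.H x}

/-- Patently inconsistent set: contains a formula together with its negation. -/
def PatentlyInconsistent (Δ : Set (Formula Agt AP)) : Prop :=
  ∃ φ : Formula Agt AP, φ ∈ Δ ∧ Formula.neg φ ∈ Δ

/-- Minimal fully expanded extension. -/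
def MinimalFEE (Γ Δ : Set (Formula Agt AP)) : Prop :=
  FullyExpanded Δ ∧ Γ ⊆ Δ ∧
  ¬ ∃ Δ' : Set (Formula Agt AP), FullyExpanded Δ' ∧ Γ ⊆ Δ' ∧ Δ' ⊂ Δ

/-- A maximal path from `x` to `y`: consecutive points are related by `R^D_{A_i}`
and by no `R^D_B` for a strictly larger coalition `B`. -/
def IsMaximalPath (G : TES Agt) (m : ℕ) (pts : ℕ → G.Point) (cs : ℕ → Coalition Agt)
    (x y : G.Point) : Prop :=
  pts 0 = x ∧ pts m = y ∧ ∀ i < m,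
    G.RD (cs i) (pts i) (pts (i + 1)) ∧
    ∀ B : Coalition Agt, (cs i).1 ⊂ B.1 → ¬ G.RD B (pts i) (pts (i + 1))

/-- A maximal path equals its reduction iff no two consecutive points lie on the
same run and no two consecutive coalition labels coincide. -/
def IsReducedPath (G : TES Agt) (m : ℕ) (pts : ℕ → G.Point) (cs : ℕ → Coalition Agt) : Prop :=
  (∀ i < m, (pts i).1 ≠ (pts (i + 1)).1) ∧ (∀ i, i + 1 < m → cs i ≠ cs (i + 1))

/-- Forest-likeness: between any two points there is at most one reduced maximal path. -/
def ForestLike (G : TES Agt) : Prop :=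
  ∀ (x y : G.Point) (m₁ : ℕ) (pts₁ : ℕ → G.Point) (cs₁ : ℕ → Coalition Agt)
    (m₂ : ℕ) (pts₂ : ℕ → G.Point) (cs₂ : ℕ → Coalition Agt),
    IsMaximalPath G m₁ pts₁ cs₁ x y → IsReducedPath G m₁ pts₁ cs₁ →
    IsMaximalPath G m₂ pts₂ cs₂ x y → IsReducedPath G m₂ pts₂ cs₂ →
    m₁ = m₂ ∧ (∀ i ≤ m₁, pts₁ i = pts₂ i) ∧ (∀ i < m₁, cs₁ i = cs₂ i)

/-- Finite conjunction of a nonempty list of formulas. -/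
def bigAnd : Formula Agt AP → List (Formula Agt AP) → Formula Agt AP
  | φ, [] => φ
  | φ, ψ :: l => Formula.and φ (bigAnd ψ l)

/-- `D_{{a}}(φ ∧ C_A φ)`. -/
def dform (A : Coalition Agt) (φ : Formula Agt AP) (a : Agt) : Formula Agt AP :=
  Formula.dk (single a) (Formula.and φ (Formula.ck A φ))

/-!
Both halves are proved together, by induction on the formula. The epistemic cases rest on
two facts about the labels: `D_A`-formulas are constant along `R'^D_A`, because (H6) transfers
them along every `R^D_B` with `B ⊇ A`; and `C_A φ` travels along each `R'^D_{{a}}`-step of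
`R'^C_A`, carried by its expansion `D_{{a}}(φ ∧ C_A φ)`. A negated until is unfolded along
the run, one time step at a time.
-/

namespace FullyExpanded

variable {Δ : Set (Formula Agt AP)} {φ ψ : Formula Agt AP}

theorem mem_of_neg_neg_mem (hΔ : FullyExpanded Δ) (h : Formula.neg (Formula.neg φ) ∈ Δ) :
    φ ∈ Δ :=
  hΔ.1 φ h

theorem mem_of_and_mem (hΔ : FullyExpanded Δ) (h : Formula.and φ ψ ∈ Δ) : φ ∈ Δ ∧ ψ ∈ Δ :=
  hΔ.2.1 φ ψ h

theorem neg_mem_or_neg_mem_of_neg_and_mem (hΔ : FullyExpanded Δ)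
    (h : Formula.neg (Formula.and φ ψ) ∈ Δ) :
    Formula.neg φ ∈ Δ ∨ Formula.neg ψ ∈ Δ :=
  hΔ.2.2.1 φ ψ h

theorem next_neg_mem_of_neg_next_mem (hΔ : FullyExpanded Δ)
    (h : Formula.neg (Formula.next φ) ∈ Δ) :
    Formula.next (Formula.neg φ) ∈ Δ :=
  hΔ.2.2.2.1 φ h

theorem of_neg_untl_mem (hΔ : FullyExpanded Δ) (h : Formula.neg (Formula.untl φ ψ) ∈ Δ) :
    Formula.neg ψ ∈ Δ ∧
      (Formula.neg φ ∈ Δ ∨ Formula.neg (Formula.next (Formula.untl φ ψ)) ∈ Δ) := by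
  rcases hΔ.2.2.2.2.2.1 φ ψ h with ⟨hψ, hφ⟩ | ⟨hψ, hnext⟩
  exacts [⟨hψ, .inl hφ⟩, ⟨hψ, .inr hnext⟩]

theorem mem_of_dk_mem (hΔ : FullyExpanded Δ) {A : Coalition Agt} (h : Formula.dk A φ ∈ Δ) :
    φ ∈ Δ :=
  hΔ.2.2.2.2.2.2.2.1 A φ h

theorem dform_mem_of_ck_mem (hΔ : FullyExpanded Δ) {A : Coalition Agt} (h : Formula.ck A φ ∈ Δ)
    {a : Agt} (ha : a ∈ A.1) : dform A φ a ∈ Δ :=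
  hΔ.2.2.2.2.2.2.2.2.1 A φ h a ha

end FullyExpanded

theorem TES.derivedRC_of_RC (G : TES Agt) {A : Coalition Agt} {x y : G.Point}
    (h : G.RC A x y) : derivedRC G A x y := by
  rw [G.hRC] at h
  induction h with
  | refl =>
    obtain ⟨a, ha⟩ := A.2
    exact .single ⟨a, ha, .refl x⟩
  | tail _ hstep ih =>
    obtain ⟨A', hA'A, hRD⟩ := hstep
    obtain ⟨a, ha⟩ := A'.2
    exact ih.tail ⟨a, hA'A ha, .rel _ _ ⟨A', Set.singleton_subset_iff.mpr ha, hRD⟩⟩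

namespace TEHS

variable (Hs : TEHS Agt AP) {φ ψ : Formula Agt AP} {A : Coalition Agt}

theorem not_mem_of_neg_mem {x : Hs.G.Point} (h : Formula.neg φ ∈ Hs.H x) : φ ∉ Hs.H x :=
  Hs.isH.1 x φ h

theorem fullyExpanded (x : Hs.G.Point) : FullyExpanded (Hs.H x) :=
  Hs.isH.2.1 x

theorem mem_of_next_mem {r : ↥Hs.G.runs} {n : ℕ} (h : Formula.next φ ∈ Hs.H (r, n)) :
    φ ∈ Hs.H (r, n + 1) :=
  Hs.isH.2.2.1 r n φ h

theorem neg_mem_of_neg_next_mem {r : ↥Hs.G.runs} {n : ℕ}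
    (h : Formula.neg (Formula.next φ) ∈ Hs.H (r, n)) : Formula.neg φ ∈ Hs.H (r, n + 1) :=
  Hs.mem_of_next_mem ((Hs.fullyExpanded _).next_neg_mem_of_neg_next_mem h)

theorem exists_of_untl_mem {r : ↥Hs.G.runs} {n : ℕ} (h : Formula.untl φ ψ ∈ Hs.H (r, n)) :
    ∃ i, n ≤ i ∧ ψ ∈ Hs.H (r, i) ∧ ∀ j, n ≤ j → j < i → φ ∈ Hs.H (r, j) :=
  Hs.isH.2.2.2.1 r n φ ψ h

theorem exists_RD_of_neg_dk_mem {x : Hs.G.Point} (h : Formula.neg (Formula.dk A φ) ∈ Hs.H x) :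
    ∃ y, Hs.G.RD A x y ∧ Formula.neg φ ∈ Hs.H y :=
  Hs.isH.2.2.2.2.1 x A φ h

theorem exists_RC_of_neg_ck_mem {x : Hs.G.Point} (h : Formula.neg (Formula.ck A φ) ∈ Hs.H x) :
    ∃ y, Hs.G.RC A x y ∧ Formula.neg φ ∈ Hs.H y :=
  Hs.isH.2.2.2.2.2.2 x A φ h

theorem dk_mem_iff_of_derivedRD {x y : Hs.G.Point} (h : derivedRD Hs.G A x y) :
    Formula.dk A φ ∈ Hs.H x ↔ Formula.dk A φ ∈ Hs.H y := by
  induction h with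
  | rel u v huv =>
    obtain ⟨B, hAB, hRD⟩ := huv
    exact Hs.isH.2.2.2.2.2.1 u v B hRD A hAB φ
  | refl => rfl
  | symm _ _ _ ih => exact ih.symm
  | trans _ _ _ _ _ ih₁ ih₂ => exact ih₁.trans ih₂

theorem mem_of_ck_mem_of_derivedRC {x y : Hs.G.Point} (hx : Formula.ck A φ ∈ Hs.H x)
    (hxy : derivedRC Hs.G A x y) : φ ∈ Hs.H y ∧ Formula.ck A φ ∈ Hs.H y := by
  have step : ∀ {u v}, Formula.ck A φ ∈ Hs.H u →
      (∃ a ∈ A.1, derivedRD Hs.G (single a) u v) → φ ∈ Hs.H v ∧ Formula.ck A φ ∈ Hs.H v := by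
    rintro u v hu ⟨a, ha, huv⟩
    have hv : dform A φ a ∈ Hs.H v :=
      (Hs.dk_mem_iff_of_derivedRD huv).mp ((Hs.fullyExpanded u).dform_mem_of_ck_mem hu ha)
    exact (Hs.fullyExpanded v).mem_of_and_mem ((Hs.fullyExpanded v).mem_of_dk_mem hv)
  induction hxy with
  | single h => exact step hx h
  | tail _ h ih => exact step ih.2 h

theorem neg_mem_or_of_neg_untl_mem {r : ↥Hs.G.runs} :
    ∀ {n : ℕ} (k : ℕ), Formula.neg (Formula.untl φ ψ) ∈ Hs.H (r, n) →
      Formula.neg ψ ∈ Hs.H (r, n + k) ∨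
        ∃ j, n ≤ j ∧ j < n + k ∧ Formula.neg φ ∈ Hs.H (r, j)
  | n, 0, h => .inl ((Hs.fullyExpanded _).of_neg_untl_mem h).1
  | n, k + 1, h => by
    rcases ((Hs.fullyExpanded _).of_neg_untl_mem h).2 with hφ | hnext
    · exact .inr ⟨n, le_rfl, by omega, hφ⟩
    · rcases neg_mem_or_of_neg_untl_mem (n := n + 1) k (Hs.neg_mem_of_neg_next_mem hnext) with
        hψ | ⟨j, hj₁, hj₂, hφ⟩
      · exact .inl (by rwa [Nat.add_right_comm] at hψ)
      · exact .inr ⟨j, by omega, by omega, hφ⟩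

end TEHS

def TEHS.Truthful (Hs : TEHS Agt AP) (φ : Formula Agt AP) : Prop :=
  ∀ x, (φ ∈ Hs.H x → Sat (derivedRD Hs.G) (derivedRC Hs.G) (derivedLab Hs) x φ) ∧
    (Formula.neg φ ∈ Hs.H x → ¬ Sat (derivedRD Hs.G) (derivedRC Hs.G) (derivedLab Hs) x φ)

namespace TEHS.Truthful

variable {Hs : TEHS Agt AP} {φ ψ : Formula Agt AP}

theorem atom (p : AP) : Hs.Truthful (Formula.atom p) :=
  fun _ => ⟨id, Hs.not_mem_of_neg_mem⟩

theorem neg (hφ : Hs.Truthful φ) : Hs.Truthful (Formula.neg φ) :=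
  fun x => ⟨(hφ x).2, fun h => not_not_intro <|
    (hφ x).1 ((Hs.fullyExpanded x).mem_of_neg_neg_mem h)⟩

theorem and (hφ : Hs.Truthful φ) (hψ : Hs.Truthful ψ) : Hs.Truthful (Formula.and φ ψ) := by
  refine fun x => ⟨fun h => ?_, fun h ⟨sφ, sψ⟩ => ?_⟩
  · obtain ⟨h₁, h₂⟩ := (Hs.fullyExpanded x).mem_of_and_mem h
    exact ⟨(hφ x).1 h₁, (hψ x).1 h₂⟩
  · rcases (Hs.fullyExpanded x).neg_mem_or_neg_mem_of_neg_and_mem h with h₁ | h₂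
    exacts [(hφ x).2 h₁ sφ, (hψ x).2 h₂ sψ]

theorem next (hφ : Hs.Truthful φ) : Hs.Truthful (Formula.next φ) :=
  fun ⟨_, _⟩ => ⟨fun h => (hφ _).1 (Hs.mem_of_next_mem h),
    fun h => (hφ _).2 (Hs.neg_mem_of_neg_next_mem h)⟩

theorem untl (hφ : Hs.Truthful φ) (hψ : Hs.Truthful ψ) : Hs.Truthful (Formula.untl φ ψ) := by
  rintro ⟨r, n⟩
  refine ⟨fun h => ?_, fun h ⟨i, hni, sψ, sφ⟩ => ?_⟩
  · obtain ⟨i, hni, hψi, hφj⟩ := Hs.exists_of_untl_mem h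
    exact ⟨i, hni, (hψ _).1 hψi, fun j hj₁ hj₂ => (hφ _).1 (hφj j hj₁ hj₂)⟩
  · obtain ⟨k, rfl⟩ := Nat.exists_eq_add_of_le hni
    rcases Hs.neg_mem_or_of_neg_untl_mem k h with hψi | ⟨j, hj₁, hj₂, hφj⟩
    exacts [(hψ _).2 hψi sψ, (hφ _).2 hφj (sφ j hj₁ hj₂)]

theorem dk (A : Coalition Agt) (hφ : Hs.Truthful φ) : Hs.Truthful (Formula.dk A φ) := by
  refine fun x => ⟨fun h y hxy => ?_, fun h sφ => ?_⟩
  · have hy := (Hs.dk_mem_iff_of_derivedRD hxy).mp h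
    exact (hφ y).1 ((Hs.fullyExpanded y).mem_of_dk_mem hy)
  · obtain ⟨y, hxy, hy⟩ := Hs.exists_RD_of_neg_dk_mem h
    exact (hφ y).2 hy (sφ y (.rel _ _ ⟨A, subset_rfl, hxy⟩))

theorem ck (A : Coalition Agt) (hφ : Hs.Truthful φ) : Hs.Truthful (Formula.ck A φ) := by
  refine fun x => ⟨fun h y hxy => ?_, fun h sφ => ?_⟩
  · exact (hφ y).1 (Hs.mem_of_ck_mem_of_derivedRC h hxy).1
  · obtain ⟨y, hxy, hy⟩ := Hs.exists_RC_of_neg_ck_mem h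
    exact (hφ y).2 hy (sφ y (Hs.G.derivedRC_of_RC hxy))

end TEHS.Truthful

theorem TEHS.truthful (Hs : TEHS Agt AP) (χ : Formula Agt AP) : Hs.Truthful χ := by
  induction χ with
  | atom p => exact .atom p
  | neg φ ih => exact ih.neg
  | and φ ψ ihφ ihψ => exact ihφ.and ihψ
  | next φ ih => exact ih.next
  | untl φ ψ ihφ ihψ => exact ihφ.untl ihψ
  | dk A φ ih => exact ih.dk A
  | ck A φ ih => exact ih.ck A

theorem statement_7_general {Agt AP : Type}
    (Hs : TEHS Agt AP) (χ : Formula Agt AP) (x : Hs.G.Point) :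
    (χ ∈ Hs.H x → Sat (derivedRD Hs.G) (derivedRC Hs.G) (derivedLab Hs) x χ) ∧
    (Formula.neg χ ∈ Hs.H x →
        Sat (derivedRD Hs.G) (derivedRC Hs.G) (derivedLab Hs) x (Formula.neg χ)) :=
  Hs.truthful χ x

/-- Truth lemma for the pseudo-TEM `M'` derived from a TEHS: membership
`χ ∈ H(r,n)` implies `M',(r,n) ⊨ χ`, and `¬χ ∈ H(r,n)` implies `M',(r,n) ⊨ ¬χ`. -/
theorem statement_7 {Agt AP : Type} [Fintype Agt] [Nonempty Agt]
    (Hs : TEHS Agt AP) (χ : Formula Agt AP) (x : Hs.G.Point) :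
    (χ ∈ Hs.H x → Sat (derivedRD Hs.G) (derivedRC Hs.G) (derivedLab Hs) x χ) ∧
    (Formula.neg χ ∈ Hs.H x →
        Sat (derivedRD Hs.G) (derivedRC Hs.G) (derivedLab Hs) x (Formula.neg χ)) :=
  statement_7_general Hs χ x

end CMATEL
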